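/- Let S : ℝ² → ℝ³ be a smooth (C^∞) map of (x,y) with |S(x,y)| = 1 for all (x,y), let v₀ : ℝ² → ℝ be a smooth function satisfying ∂_x v₀ = ∂_x S · ∂_x∂_y S, and let v₁ : ℝ² → ℝ be any smooth function. Then at every point S · ( ∂_x²∂_y S + ∂_x( (∂_x S · ∂_y S + v₀) S - v₁ S × ∂_x S ) ) = 0; i.e., the right-hand side of the 2+1 dimensional integrable mKdV spin model -S_t = S_{xxy} + ((S_x·S_y + v₀)S - v₁ S×S_x)_x is everywhere orthogonal to S, so the flow preserves the constraint |S| = 1. -/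

import Mathlib

/-!
Write `a = S_x ⬝ S_y + v₀`. Differentiating `S ⬝ S = 1` gives `S ⬝ S_x = 0`; moreover `S ⬝ (S × w) = 0`
and `S_x × S_x = 0`, so `S ⬝ ((a S - v₁ S × S_x)_x) = a_x
= S_xx ⬝ S_y + S_x ⬝ S_xy + v₀ₓ = S_xx ⬝ S_y + 2 S_x ⬝ S_xy`. Differentiating `S ⬝ S_y = 0` twice
in `x` gives `S ⬝ S_xxy = -(S_xx ⬝ S_y + 2 S_x ⬝ S_xy)`, and the two contributions cancel.
-/

noncomputable section

/-- Partial derivative with respect to the first variable `x`. -/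
def px {E : Type*} [NormedAddCommGroup E] [NormedSpace ℝ E]
    (f : ℝ × ℝ → E) : ℝ × ℝ → E := fun p => deriv (fun s => f (s, p.2)) p.1

/-- Partial derivative with respect to the second variable `y`. -/
def py {E : Type*} [NormedAddCommGroup E] [NormedSpace ℝ E]
    (f : ℝ × ℝ → E) : ℝ × ℝ → E := fun p => deriv (fun s => f (p.1, s)) p.2

/-- Euclidean dot product on `ℝ³`. -/
def dot3 (a b : Fin 3 → ℝ) : ℝ := a 0 * b 0 + a 1 * b 1 + a 2 * b 2

/-- Euclidean norm on `ℝ³`. -/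
def norm3 (a : Fin 3 → ℝ) : ℝ := Real.sqrt (dot3 a a)

/-- Cross product on `ℝ³`. -/
def cross3 (a b : Fin 3 → ℝ) : Fin 3 → ℝ :=
  ![a 1 * b 2 - a 2 * b 1, a 2 * b 0 - a 0 * b 2, a 0 * b 1 - a 1 * b 0]

open Matrix

lemma dot3_eq_dotProduct (a b : Fin 3 → ℝ) : dot3 a b = a ⬝ᵥ b :=
  (vec3_dotProduct a b).symm

lemma cross3_eq_crossProduct (a b : Fin 3 → ℝ) : cross3 a b = a ⨯₃ b :=
  rfl

section OneVariable

variable {x : ℝ}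

lemma HasDerivAt.eq_zero_of_forall_eq {E : Type*} [NormedAddCommGroup E] [NormedSpace ℝ E]
    {f : ℝ → E} {f' : E} (c : E) (hf : HasDerivAt f f' x) (hc : ∀ s, f s = c) : f' = 0 := by
  rw [show f = fun _ => c from funext hc] at hf
  exact hf.unique (hasDerivAt_const x c)

lemma HasDerivAt.dotProduct {ι : Type*} [Fintype ι] {f g : ℝ → ι → ℝ} {f' g' : ι → ℝ}
    (hf : HasDerivAt f f' x) (hg : HasDerivAt g g' x) :
    HasDerivAt (fun s => f s ⬝ᵥ g s) (f' ⬝ᵥ g x + f x ⬝ᵥ g') x := by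
  have h : HasDerivAt (fun s => ∑ i, f s i * g s i) (∑ i, (f' i * g x i + f x i * g' i)) x :=
    HasDerivAt.fun_sum fun i _ => (hasDerivAt_pi.1 hf i).fun_mul (hasDerivAt_pi.1 hg i)
  simpa only [_root_.dotProduct, Finset.sum_add_distrib] using h

lemma HasDerivAt.crossProduct {f g : ℝ → Fin 3 → ℝ} {f' g' : Fin 3 → ℝ}
    (hf : HasDerivAt f f' x) (hg : HasDerivAt g g' x) :
    HasDerivAt (fun s => f s ⨯₃ g s) (f' ⨯₃ g x + f x ⨯₃ g') x := by
  have hfi := hasDerivAt_pi.1 hf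
  have hgi := hasDerivAt_pi.1 hg
  refine hasDerivAt_pi.2 fun i => ?_
  fin_cases i
  · exact (((hfi 1).mul (hgi 2)).sub ((hfi 2).mul (hgi 1))).congr_deriv
      (by simp [cross_apply]; ring)
  · exact (((hfi 2).mul (hgi 0)).sub ((hfi 0).mul (hgi 2))).congr_deriv
      (by simp [cross_apply]; ring)
  · exact (((hfi 0).mul (hgi 1)).sub ((hfi 1).mul (hgi 0))).congr_deriv
      (by simp [cross_apply]; ring)

end OneVariable

section PartialDerivatives

variable {E : Type*} [NormedAddCommGroup E] [NormedSpace ℝ E] {f : ℝ × ℝ → E}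

variable {p : ℝ × ℝ}

lemma hasDerivAt_px (hf : DifferentiableAt ℝ f p) :
    HasDerivAt (fun s => f (s, p.2)) (px f p) p.1 :=
  (hf.comp p.1 (differentiableAt_id.prodMk (differentiableAt_const p.2))).hasDerivAt

lemma hasDerivAt_py (hf : DifferentiableAt ℝ f p) :
    HasDerivAt (fun s => f (p.1, s)) (py f p) p.2 :=
  (hf.comp p.2 ((differentiableAt_const p.1).prodMk differentiableAt_id)).hasDerivAt

lemma px_eq_fderiv (hf : DifferentiableAt ℝ f p) : px f p = fderiv ℝ f p (1, 0) :=
  (hf.hasFDerivAt.comp_hasDerivAt p.1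
    ((hasDerivAt_id p.1).prodMk (hasDerivAt_const p.1 p.2))).deriv

lemma py_eq_fderiv (hf : DifferentiableAt ℝ f p) : py f p = fderiv ℝ f p (0, 1) :=
  (hf.hasFDerivAt.comp_hasDerivAt p.2
    ((hasDerivAt_const p.2 p.1).prodMk (hasDerivAt_id p.2))).deriv

variable {n m : WithTop ℕ∞}

lemma contDiff_px (hf : ContDiff ℝ n f) (hmn : m + 1 ≤ n) : ContDiff ℝ m (px f) := by
  have hd := hf.differentiable (ne_bot_of_le_ne_bot one_ne_zero (le_add_self.trans hmn))
  rw [show px f = fun p => fderiv ℝ f p (1, 0) from funext fun p => px_eq_fderiv (hd p)]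
  exact (hf.fderiv_right hmn).clm_apply contDiff_const

lemma contDiff_py (hf : ContDiff ℝ n f) (hmn : m + 1 ≤ n) : ContDiff ℝ m (py f) := by
  have hd := hf.differentiable (ne_bot_of_le_ne_bot one_ne_zero (le_add_self.trans hmn))
  rw [show py f = fun p => fderiv ℝ f p (0, 1) from funext fun p => py_eq_fderiv (hd p)]
  exact (hf.fderiv_right hmn).clm_apply contDiff_const

end PartialDerivatives

section SpinField

variable {ι : Type*} [Fintype ι] {S : ℝ × ℝ → ι → ℝ}

lemma dotProduct_px_self_eq_zero (hS : Differentiable ℝ S) (hunit : ∀ q, S q ⬝ᵥ S q = 1)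
    (p : ℝ × ℝ) : S p ⬝ᵥ px S p = 0 := by
  have h := ((hasDerivAt_px (hS p)).dotProduct (hasDerivAt_px (hS p))).eq_zero_of_forall_eq 1
    fun s => hunit (s, p.2)
  rw [dotProduct_comm] at h
  linarith

lemma dotProduct_py_self_eq_zero (hS : Differentiable ℝ S) (hunit : ∀ q, S q ⬝ᵥ S q = 1)
    (p : ℝ × ℝ) : S p ⬝ᵥ py S p = 0 := by
  have h := ((hasDerivAt_py (hS p)).dotProduct (hasDerivAt_py (hS p))).eq_zero_of_forall_eq 1
    fun s => hunit (p.1, s)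
  rw [dotProduct_comm] at h
  linarith

lemma dotProduct_px_px_py (hS : ContDiff ℝ 3 S) (hunit : ∀ q, S q ⬝ᵥ S q = 1) (p : ℝ × ℝ) :
    S p ⬝ᵥ px (px (py S)) p
      = -(px (px S) p ⬝ᵥ py S p + 2 * (px S p ⬝ᵥ px (py S) p)) := by
  have hS₁ : Differentiable ℝ S := hS.differentiable (by norm_num)
  have hSx : Differentiable ℝ (px S) :=
    (contDiff_px hS (m := 2) (by norm_num)).differentiable (by norm_num)
  have hSy₂ : ContDiff ℝ 2 (py S) := contDiff_py hS (by norm_num)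
  have hSy : Differentiable ℝ (py S) := hSy₂.differentiable (by norm_num)
  have hSxy : Differentiable ℝ (px (py S)) :=
    (contDiff_px hSy₂ (m := 1) (by norm_num)).differentiable (by norm_num)
  have hSSy : ∀ q, S q ⬝ᵥ py S q = 0 := dotProduct_py_self_eq_zero hS₁ hunit
  have hSSy_x : ∀ q, px S q ⬝ᵥ py S q + S q ⬝ᵥ px (py S) q = 0 := fun q =>
    ((hasDerivAt_px (hS₁ q)).dotProduct (hasDerivAt_px (hSy q))).eq_zero_of_forall_eq 0
      fun s => hSSy (s, q.2)
  have hSSy_xx := (((hasDerivAt_px (hSx p)).dotProduct (hasDerivAt_px (hSy p))).add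
    ((hasDerivAt_px (hS₁ p)).dotProduct (hasDerivAt_px (hSxy p)))).eq_zero_of_forall_eq 0
    fun s => hSSy_x (s, p.2)
  linarith

end SpinField

lemma dotProduct_mkdv_rhs_eq_zero {S : ℝ × ℝ → Fin 3 → ℝ} {v₀ v₁ : ℝ × ℝ → ℝ}
    (hS : ContDiff ℝ 3 S) (hv₀ : Differentiable ℝ v₀) (hv₁ : Differentiable ℝ v₁)
    (hunit : ∀ q, S q ⬝ᵥ S q = 1) (hv₀x : ∀ q, px v₀ q = px S q ⬝ᵥ px (py S) q) (p : ℝ × ℝ) :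
    S p ⬝ᵥ (px (px (py S)) p
      + px (fun q => (px S q ⬝ᵥ py S q + v₀ q) • S q - v₁ q • S q ⨯₃ px S q) p) = 0 := by
  have hS₁ : Differentiable ℝ S := hS.differentiable (by norm_num)
  have hSx : Differentiable ℝ (px S) :=
    (contDiff_px hS (m := 2) (by norm_num)).differentiable (by norm_num)
  have hSy : Differentiable ℝ (py S) :=
    (contDiff_py hS (m := 2) (by norm_num)).differentiable (by norm_num)
  have hflux :
      px (fun q => (px S q ⬝ᵥ py S q + v₀ q) • S q - v₁ q • S q ⨯₃ px S q) p = _ :=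
    ((((hasDerivAt_px (hSx p)).dotProduct (hasDerivAt_px (hSy p))).fun_add
      (hasDerivAt_px (hv₀ p))).fun_smul (hasDerivAt_px (hS₁ p))).fun_sub
      ((hasDerivAt_px (hv₁ p)).fun_smul
        ((hasDerivAt_px (hS₁ p)).crossProduct (hasDerivAt_px (hSx p)))) |>.deriv
  rw [hflux]
  simp only [Prod.mk.eta, dotProduct_add, dotProduct_sub, dotProduct_smul, smul_eq_mul,
    dotProduct_zero, dot_self_cross, cross_self, hunit, dotProduct_px_self_eq_zero hS₁ hunit]
  linarith [dotProduct_px_px_py hS hunit p, hv₀x p]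

/-- The right-hand side of the 2+1 dimensional mKdV spin model
`-S_t = S_xxy + ((S_x·S_y + v₀)S - v₁ S×S_x)_x` is everywhere orthogonal
to the unit vector `S`. -/
theorem mkdv_2plus1_rhs_orthogonal
    (S : ℝ × ℝ → Fin 3 → ℝ) (v₀ v₁ : ℝ × ℝ → ℝ)
    (hS : ContDiff ℝ (⊤ : ℕ∞) S)
    (hv₀ : ContDiff ℝ (⊤ : ℕ∞) v₀) (hv₁ : ContDiff ℝ (⊤ : ℕ∞) v₁)
    (hunit : ∀ p, norm3 (S p) = 1)
    (hv₀x : ∀ p, px v₀ p = dot3 (px S p) (px (py S) p)) :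
    ∀ p, dot3 (S p)
      (px (px (py S)) p
        + px (fun q => (dot3 (px S q) (py S q) + v₀ q) • S q
            - v₁ q • cross3 (S q) (px S q)) p) = 0 := by
  have hSS : ∀ q, S q ⬝ᵥ S q = 1 := fun q =>
    dot3_eq_dotProduct _ _ ▸ Real.sqrt_eq_one.1 (hunit q)
  simp only [dot3_eq_dotProduct, cross3_eq_crossProduct] at hv₀x ⊢
  exact dotProduct_mkdv_rhs_eq_zero (hS.of_le (WithTop.coe_le_coe.2 le_top))
    (hv₀.differentiable (by simp)) (hv₁.differentiable (by simp)) hSS hv₀x
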